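/- Let G be a finite group with supercharacter theory S. Then G is a VZ(S)-group if and only if [G,S] ≤ V(S) ≤ Z(S). -/

import Mathlib

open scoped BigOperators Pointwise

/-- `f : G → ℂ` is an irreducible character of `G`. -/
def IsIrrChar (G : Type) [Group G] [Fintype G] (f : G → ℂ) : Prop :=
  ∃ V : FDRep ℂ G, CategoryTheory.Simple V ∧ V.character = f

/-- A supercharacter theory of a finite group `G` (Diaconis–Isaacs): a partition
`parts` of the set of irreducible characters of `G` together with a partition of `G`
into `S`-classes (`cls g` is the class of `g`), such that `{1}` is a class, the number
of parts equals the number of classes, and each supercharacter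
`σ_X = ∑ χ ∈ X, χ(1)·χ` is constant on every class. -/
structure SCT (G : Type) [Group G] [Fintype G] where
  parts : Finset (Finset (G → ℂ))
  cls : G → Set G
  parts_cover : ∀ f : G → ℂ, IsIrrChar G f ↔ ∃ X ∈ parts, f ∈ X
  parts_disj : ∀ X ∈ parts, ∀ Y ∈ parts, X ≠ Y → Disjoint X Y
  parts_nonempty : ∀ X ∈ parts, X.Nonempty
  mem_cls : ∀ g : G, g ∈ cls g
  cls_eq : ∀ g h : G, h ∈ cls g → cls h = cls g
  cls_one : cls (1 : G) = {1}
  card_eq : parts.card = Nat.card (Set.range cls)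
  const : ∀ X ∈ parts, ∀ g h : G, h ∈ cls g →
    (∑ χ ∈ X, χ 1 * χ h) = (∑ χ ∈ X, χ 1 * χ g)

variable {G : Type} [Group G] [Fintype G]

namespace SCT

/-- The supercharacter attached to a part `X`. -/
noncomputable def superchar (_S : SCT G) (X : Finset (G → ℂ)) : G → ℂ := fun g => ∑ χ ∈ X, χ 1 * χ g

/-- The set `Irr(S)` of `S`-characters. -/
def Irr (S : SCT G) : Set (G → ℂ) := {f | ∃ X ∈ S.parts, f = S.superchar X}

end SCT

/-- The kernel of a character-like function `f : G → ℂ`. -/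
def charKer (f : G → ℂ) : Subgroup G where
  carrier := {g | ∀ h, f (g * h) = f h}
  one_mem' := by intro h; simp
  mul_mem' := by intro a b ha hb h; rw [mul_assoc, ha, hb]
  inv_mem' := by
    intro a ha h
    have := ha (a⁻¹ * h)
    rw [mul_inv_cancel_left] at this
    exact this.symm

namespace SCT

/-- `[H,S]`, the subgroup generated by the `g⁻¹k` with `g ∈ H`, `k ∈ Cl_S(g)`. -/
def comm (S : SCT G) (H : Subgroup G) : Subgroup G :=
  Subgroup.closure {x | ∃ g ∈ H, ∃ k ∈ S.cls g, x = g⁻¹ * k}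

/-- `[G,S]`. -/
def derived (S : SCT G) : Subgroup G := S.comm ⊤

/-- `Irr(S | N)`: the `S`-characters whose kernel does not contain `N`. -/
def IrrRel (S : SCT G) (N : Subgroup G) : Set (G → ℂ) :=
  {f | f ∈ S.Irr ∧ ¬ N ≤ charKer f}

/-- `g` is an `S`-Camina element: all of `Irr(S | [G,S])` vanishes at `g`. -/
def IsCaminaElt (S : SCT G) (g : G) : Prop :=
  ∀ f ∈ S.IrrRel S.derived, f g = 0

/-- `N` is `S`-normal: a union of `S`-classes. -/
def IsNormal (S : SCT G) (N : Subgroup G) : Prop :=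
  ∀ g ∈ N, S.cls g ⊆ N

/-- `(G,N)` is a generalised `S`-Camina pair. -/
def IsGCP (S : SCT G) (N : Subgroup G) : Prop :=
  S.IsNormal N ∧ ∀ g : G, g ∉ N → S.IsCaminaElt g

/-- The set `Z(S)` of elements with singleton `S`-class. -/
def centerSet (S : SCT G) : Set G := {g | S.cls g = {g}}

/-- The vanishing-off subgroup `V(S | N)`. -/
def V (S : SCT G) (N : Subgroup G) : Subgroup G :=
  Subgroup.closure {g | ∃ f ∈ S.IrrRel N, f g ≠ 0}

/-- `V(S) = V(S | [G,S])`. -/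
def VS (S : SCT G) : Subgroup G := S.V S.derived

/-- `U(S | N)`: the product of all `S`-normal subgroups `H` with `V(S | H) ≤ N`. -/
def U (S : SCT G) (N : Subgroup G) : Subgroup G :=
  ⨆ (H : Subgroup G) (_ : S.IsNormal H ∧ S.V H ≤ N), H

/-- The upper `S`-central series: `ζ_0 = 1` and `ζ_{i+1}/ζ_i = Z(S^{G/ζ_i})`,
i.e. `ζ_{i+1}` consists of the `g` whose `S`-class maps onto the single coset `gζ_i`. -/
def zeta (S : SCT G) : ℕ → Subgroup G
  | 0 => ⊥
  | i + 1 => Subgroup.closure {g | ∀ k ∈ S.cls g, g⁻¹ * k ∈ S.zeta i}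

/-- The lower `S`-central series `γ_1 = G`, `γ_{i+1} = [γ_i, S]` (with `γ_0 := G`). -/
def gamma (S : SCT G) : ℕ → Subgroup G
  | 0 => ⊤
  | 1 => ⊤
  | n + 2 => S.comm (S.gamma (n + 1))

/-- The series `V_1(S) = V(S)`, `V_{i+1}(S) = [V_i(S), S]` (with `V_0 := V(S)`). -/
def Vseq (S : SCT G) : ℕ → Subgroup G
  | 0 => S.VS
  | 1 => S.VS
  | n + 2 => S.comm (S.Vseq (n + 1))

/-- `G` is a `VZ(S)`-group: every member of `Irr(S | [G,S])` vanishes off `Z(S)`. -/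
def IsVZ (S : SCT G) : Prop :=
  ∀ f ∈ S.IrrRel S.derived, ∀ g : G, g ∉ S.centerSet → f g = 0

end SCT

/-!
The supercharacters `σ_X` are orthogonal to the irreducible characters outside `X`, so they
are linearly independent; as there are as many parts as `S`-classes, they form a basis of the
`S`-class functions. Hence they separate `S`-classes, and the coefficients of a class function
in this basis are read off by pairing with irreducible characters.

`[G,S] ≤ V(S)` always: if `x = g⁻¹k ∉ V(S)`, every `σ_X` either vanishes at `x` or contains
`[G,S]` in its kernel, so `σ_X(x) ∈ {0, σ_X(1)}`, and not all `σ_X(x)` vanish. Then the regular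
character `∑ σ_X` has positive real part at `x`, which is impossible for `x ≠ 1`.

For `V(S) ⊆ Z(S)` it suffices that `Z(S)` is closed under products. An element `z` with singleton
`S`-class is central, so by Schur's lemma `χ(z⁻¹g) = (χ(z⁻¹)/χ(1)) χ(g)`, and pairing the
indicator of `{z}` with `χ ∈ X` shows that `χ(z⁻¹)/χ(1)` depends only on `X`. So `σ_X(z⁻¹ ·)` is
a multiple of `σ_X`, left multiplication by `z⁻¹` maps `S`-classes into `S`-classes, and
`k ∈ Cl_S(zw)` forces `z⁻¹k ∈ Cl_S(w) = {w}`.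
-/

open CategoryTheory

/-- For a character `ψ`, `ψ g⁻¹ = conj (ψ g)`, so this is the usual inner product `⟨f, ψ⟩`. -/
noncomputable def charInner (ψ : G → ℂ) : (G → ℂ) →ₗ[ℂ] ℂ where
  toFun f := (Nat.card G : ℂ)⁻¹ * ∑ g, f g * ψ g⁻¹
  map_add' f f' := by simp only [Pi.add_apply, add_mul, Finset.sum_add_distrib, mul_add]
  map_smul' c f := by
    simp only [Pi.smul_apply, smul_eq_mul, mul_assoc, ← Finset.mul_sum, RingHom.id_apply]
    ring

lemma charInner_apply (ψ f : G → ℂ) :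
    charInner ψ f = (Nat.card G : ℂ)⁻¹ * ∑ g, f g * ψ g⁻¹ := rfl

lemma charInner_indicator_singleton (ψ : G → ℂ) (z : G) :
    charInner ψ (({z} : Set G).indicator 1) = (Nat.card G : ℂ)⁻¹ * ψ z⁻¹ := by
  classical
  simp [charInner_apply, Pi.single_apply, ite_mul]

namespace IsIrrChar

variable {f ψ : G → ℂ}

lemma exists_apply_one_eq_nat (hf : IsIrrChar G f) : ∃ n : ℕ, 0 < n ∧ f 1 = n := by
  obtain ⟨V, hV, rfl⟩ := hf
  have : Nontrivial V := by
    by_contra h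
    rw [not_nontrivial_iff_subsingleton] at h
    exact id_nonzero V (by ext v; exact Subsingleton.elim _ _)
  exact ⟨Module.finrank ℂ V, Module.finrank_pos, FDRep.char_one V⟩

lemma apply_one_ne_zero (hf : IsIrrChar G f) : f 1 ≠ 0 := by
  obtain ⟨n, hn, h⟩ := hf.exists_apply_one_eq_nat
  rw [h]
  exact_mod_cast hn.ne'

lemma charInner_eq (hf : IsIrrChar G f) (hψ : IsIrrChar G ψ) :
    charInner ψ f = if f = ψ then 1 else 0 := by
  obtain ⟨V, hV, rfl⟩ := hf
  obtain ⟨W, hW, rfl⟩ := hψ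
  have : Invertible (Nat.card G : ℂ) := invertibleOfNonzero (by simp)
  split_ifs with h
  · rw [charInner_apply, ← h, (FDRep.simple_iff_char_is_norm_one V).mp hV]
    exact inv_mul_cancel₀ (by simp)
  · have hVW : ¬ Nonempty (V ≅ W) := fun ⟨e⟩ => h (FDRep.char_iso e)
    simpa [hVW, charInner_apply] using FDRep.char_orthonormal V W

lemma apply_conj (hf : IsIrrChar G f) (g h : G) : f (h * g * h⁻¹) = f g := by
  obtain ⟨V, -, rfl⟩ := hf
  exact FDRep.char_conj V g h

/-- Schur's lemma: a central element acts on an irreducible representation by a scalar. -/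
lemma apply_one_mul_apply_mul_of_mem_center (hf : IsIrrChar G f) {z : G}
    (hz : z ∈ Subgroup.center G) (g : G) : f 1 * f (z * g) = f z * f g := by
  obtain ⟨V, hV, rfl⟩ := hf
  let φ : V ⟶ V := ⟨FGModuleCat.ofHom (V.ρ z), fun g => by
    ext v
    change V.ρ z (V.ρ g v) = V.ρ g (V.ρ z v)
    rw [← Module.End.mul_apply, ← map_mul, ← Module.End.mul_apply, ← map_mul,
      (Subgroup.mem_center_iff.mp hz g)]⟩
  obtain ⟨c, hc⟩ := endomorphism_simple_eq_smul_id ℂ φ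
  have hρ : V.ρ z = c • LinearMap.id := (congrArg (fun ψ : V ⟶ V => ψ.hom.hom.hom) hc).symm
  have hmul : ∀ g, V.character (z * g) = c * V.character g := fun g => by
    rw [FDRep.character, FDRep.character, map_mul, hρ, smul_mul_assoc, ← Module.End.one_eq_id,
      one_mul, map_smul, smul_eq_mul]
  have hz1 := hmul 1
  rw [mul_one] at hz1
  rw [hmul, hz1]
  ring

end IsIrrChar

namespace SCT

variable (S : SCT G)

lemma isIrrChar_of_mem {X : Finset (G → ℂ)} (hX : X ∈ S.parts) {χ : G → ℂ} (hχ : χ ∈ X) :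
    IsIrrChar G χ :=
  (S.parts_cover χ).mpr ⟨X, hX, hχ⟩

lemma eq_of_mem_of_mem {X Y : Finset (G → ℂ)} (hX : X ∈ S.parts) (hY : Y ∈ S.parts)
    {χ : G → ℂ} (hχX : χ ∈ X) (hχY : χ ∈ Y) : X = Y := by
  by_contra hne
  exact Finset.disjoint_left.mp (S.parts_disj X hX Y hY hne) hχX hχY

lemma mem_cls_iff {a b : G} : a ∈ S.cls b ↔ S.cls a = S.cls b :=
  ⟨S.cls_eq b a, fun h => h ▸ S.mem_cls a⟩

def clsFun : Submodule ℂ (G → ℂ) where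
  carrier := {f | ∀ g h : G, h ∈ S.cls g → f h = f g}
  add_mem' hf hf' g h hh := by simp [hf g h hh, hf' g h hh]
  zero_mem' _ _ _ := rfl
  smul_mem' c f hf g h hh := by simp [hf g h hh]

lemma superchar_mem_clsFun {X : Finset (G → ℂ)} (hX : X ∈ S.parts) :
    S.superchar X ∈ S.clsFun :=
  S.const X hX

lemma indicator_cls_mem_clsFun (b : G) : (S.cls b).indicator 1 ∈ S.clsFun := by
  intro g h hh
  have hmem : h ∈ S.cls b ↔ g ∈ S.cls b := by rw [S.mem_cls_iff, S.mem_cls_iff, S.cls_eq g h hh]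
  by_cases hg : g ∈ S.cls b
  · rw [Set.indicator_of_mem hg, Set.indicator_of_mem (hmem.mpr hg)]
    rfl
  · rw [Set.indicator_of_notMem hg, Set.indicator_of_notMem (mt hmem.mp hg)]

/-- A class function is determined by its values on a set of class representatives. -/
lemma finrank_clsFun_le : Module.finrank ℂ S.clsFun ≤ S.parts.card := by
  have : Fintype (Set.range S.cls) := Fintype.ofFinite _
  let restrict : S.clsFun →ₗ[ℂ] (Set.range S.cls → ℂ) :=
    (LinearMap.pi fun C => LinearMap.proj C.2.choose) ∘ₗ S.clsFun.subtype
  have hinj : Function.Injective restrict := by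
    rw [← LinearMap.ker_eq_bot, LinearMap.ker_eq_bot']
    intro f hf
    ext g
    let C : Set.range S.cls := ⟨S.cls g, g, rfl⟩
    have hg : g ∈ S.cls C.2.choose := S.mem_cls_iff.mpr C.2.choose_spec.symm
    rw [f.2 _ g hg]
    exact congrFun hf C
  calc Module.finrank ℂ S.clsFun ≤ Module.finrank ℂ (Set.range S.cls → ℂ) :=
        LinearMap.finrank_le_finrank_of_injective hinj
    _ = S.parts.card := by simp [S.card_eq, Nat.card_eq_fintype_card]

lemma superchar_eq_sum (X : Finset (G → ℂ)) : S.superchar X = ∑ χ ∈ X, χ 1 • χ := by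
  funext g
  simp only [SCT.superchar, Finset.sum_apply, Pi.smul_apply, smul_eq_mul]

lemma charInner_superchar {X : Finset (G → ℂ)} (hX : X ∈ S.parts) {ψ : G → ℂ}
    (hψ : IsIrrChar G ψ) : charInner ψ (S.superchar X) = if ψ ∈ X then ψ 1 else 0 := by
  rw [superchar_eq_sum, map_sum, Finset.sum_congr rfl fun χ hχ => by
    rw [map_smul, (S.isIrrChar_of_mem hX hχ).charInner_eq hψ, smul_eq_mul, mul_ite, mul_one,
      mul_zero]]
  exact Finset.sum_ite_eq' X ψ fun χ => χ 1

lemma charInner_sum_smul_superchar (c : S.parts → ℂ) {Y : Finset (G → ℂ)} (hY : Y ∈ S.parts)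
    {χ : G → ℂ} (hχ : χ ∈ Y) :
    charInner χ (∑ X : S.parts, c X • S.superchar X) = c ⟨Y, hY⟩ * χ 1 := by
  have hirr := S.isIrrChar_of_mem hY hχ
  rw [map_sum, Finset.sum_eq_single ⟨Y, hY⟩, map_smul, S.charInner_superchar hY hirr,
    if_pos hχ, smul_eq_mul]
  · intro X _ hXY
    have hχX : χ ∉ X.1 := fun h => hXY (Subtype.ext (S.eq_of_mem_of_mem X.2 hY h hχ))
    rw [map_smul, S.charInner_superchar X.2 hirr, if_neg hχX, smul_zero]
  · exact fun h => (h (Finset.mem_univ _)).elim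

lemma linearIndependent_superchar :
    LinearIndependent ℂ fun X : S.parts => S.superchar X := by
  rw [Fintype.linearIndependent_iff]
  intro c hc Y
  obtain ⟨χ, hχ⟩ := S.parts_nonempty Y.1 Y.2
  have h := S.charInner_sum_smul_superchar c Y.2 hχ
  rw [hc, map_zero] at h
  exact (mul_eq_zero.mp h.symm).resolve_right (S.isIrrChar_of_mem Y.2 hχ).apply_one_ne_zero

lemma span_superchar :
    Submodule.span ℂ (Set.range fun X : S.parts => S.superchar X) = S.clsFun := by
  refine Submodule.eq_of_le_of_finrank_le ?_ ?_
  · rw [Submodule.span_le]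
    rintro f ⟨X, rfl⟩
    exact S.superchar_mem_clsFun X.2
  · rw [finrank_span_eq_card S.linearIndependent_superchar, Fintype.card_coe]
    exact S.finrank_clsFun_le

lemma exists_sum_smul_superchar_eq {f : G → ℂ} (hf : f ∈ S.clsFun) :
    ∃ c : S.parts → ℂ, ∑ X : S.parts, c X • S.superchar X = f := by
  rw [← span_superchar, Submodule.mem_span_range_iff_exists_fun] at hf
  exact hf

lemma mem_cls_of_forall_superchar_eq {a b : G}
    (h : ∀ X ∈ S.parts, S.superchar X a = S.superchar X b) : a ∈ S.cls b := by
  obtain ⟨c, hc⟩ := S.exists_sum_smul_superchar_eq (S.indicator_cls_mem_clsFun b)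
  have hab : (S.cls b).indicator 1 a = (S.cls b).indicator (1 : G → ℂ) b := by
    rw [← hc]
    simp only [Finset.sum_apply, Pi.smul_apply, h _ (Subtype.prop _)]
  by_contra ha
  rw [Set.indicator_of_notMem ha, Set.indicator_of_mem (S.mem_cls b)] at hab
  exact zero_ne_one hab

lemma sum_superchar :
    ∑ X : S.parts, S.superchar X = (Nat.card G : ℂ) • ({1} : Set G).indicator 1 := by
  have hmem : ({1} : Set G).indicator (1 : G → ℂ) ∈ S.clsFun :=
    S.cls_one ▸ S.indicator_cls_mem_clsFun 1
  obtain ⟨c, hc⟩ := S.exists_sum_smul_superchar_eq hmem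
  have hcoeff : ∀ X, c X = (Nat.card G : ℂ)⁻¹ := by
    intro X
    obtain ⟨χ, hχ⟩ := S.parts_nonempty X.1 X.2
    have h := S.charInner_sum_smul_superchar c X.2 hχ
    rw [hc, charInner_indicator_singleton, inv_one] at h
    exact mul_right_cancel₀ (S.isIrrChar_of_mem X.2 hχ).apply_one_ne_zero h.symm
  have hcard : (Nat.card G : ℂ) ≠ 0 := by simp
  rw [← hc, Finset.smul_sum]
  simp only [hcoeff, smul_smul, mul_inv_cancel₀ hcard, one_smul]

lemma superchar_one_re_pos {X : Finset (G → ℂ)} (hX : X ∈ S.parts) :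
    0 < (S.superchar X 1).re := by
  rw [SCT.superchar, Complex.re_sum]
  refine Finset.sum_pos (fun χ hχ => ?_) (S.parts_nonempty X hX)
  obtain ⟨n, hn, h⟩ := (S.isIrrChar_of_mem hX hχ).exists_apply_one_eq_nat
  rw [h]
  norm_cast
  positivity

lemma exists_superchar_apply_ne_zero (g : G) : ∃ X ∈ S.parts, S.superchar X g ≠ 0 := by
  obtain ⟨c, hc⟩ := S.exists_sum_smul_superchar_eq (f := 1) fun _ _ _ => rfl
  by_contra! h
  have hg := congrFun hc g
  simp [Finset.sum_apply, h _ (Subtype.prop _)] at hg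

lemma derived_le_VS : S.derived ≤ S.VS := by
  rw [SCT.derived, SCT.comm, Subgroup.closure_le]
  rintro _ ⟨g, -, k, hk, rfl⟩
  set x := g⁻¹ * k
  have hx : x ∈ S.derived := Subgroup.subset_closure ⟨g, trivial, k, hk, rfl⟩
  by_contra hxV
  have hval : ∀ X : S.parts, S.superchar X x ≠ 0 → S.superchar X x = S.superchar X 1 := by
    intro X hX0
    have hker : S.derived ≤ charKer (S.superchar X) := by
      by_contra hker
      exact hxV (Subgroup.subset_closure ⟨_, ⟨⟨X, X.2, rfl⟩, hker⟩, hX0⟩)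
    simpa using hker hx 1
  have hx1 : x ≠ 1 := fun h => hxV (h ▸ Subgroup.one_mem _)
  obtain ⟨X₀, hX₀, hne⟩ := S.exists_superchar_apply_ne_zero x
  have hpos : 0 < (∑ X : S.parts, S.superchar X x).re := by
    rw [Complex.re_sum]
    refine Finset.sum_pos' (fun X _ => ?_) ⟨⟨X₀, hX₀⟩, Finset.mem_univ _, ?_⟩
    · by_cases h0 : S.superchar X x = 0
      · simp [h0]
      · exact (hval X h0 ▸ S.superchar_one_re_pos X.2).le
    · exact hval ⟨X₀, hX₀⟩ hne ▸ S.superchar_one_re_pos hX₀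
  have hsum : ∑ X : S.parts, S.superchar X x = 0 := by
    simpa [Finset.sum_apply, hx1] using congrFun S.sum_superchar x
  exact hpos.ne' (by rw [hsum, Complex.zero_re])

lemma centerSet_subset_center : S.centerSet ⊆ Subgroup.center G := by
  intro z hz
  rw [SetLike.mem_coe, Subgroup.mem_center_iff]
  intro h
  have hconj : h * z * h⁻¹ ∈ S.cls z := S.mem_cls_of_forall_superchar_eq fun X hX =>
    Finset.sum_congr rfl fun χ hχ => by rw [(S.isIrrChar_of_mem hX hχ).apply_conj]
  rw [(hz : S.cls z = {z}), Set.mem_singleton_iff] at hconj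
  exact mul_inv_eq_iff_eq_mul.mp hconj

lemma exists_superchar_inv_mul {z : G} (hz : z ∈ S.centerSet) {X : Finset (G → ℂ)}
    (hX : X ∈ S.parts) : ∃ ε : ℂ, ∀ g, S.superchar X (z⁻¹ * g) = ε * S.superchar X g := by
  have hmem : ({z} : Set G).indicator (1 : G → ℂ) ∈ S.clsFun :=
    (hz : S.cls z = {z}) ▸ S.indicator_cls_mem_clsFun z
  obtain ⟨c, hc⟩ := S.exists_sum_smul_superchar_eq hmem
  refine ⟨Nat.card G * c ⟨X, hX⟩, fun g => ?_⟩
  have hχ : ∀ χ ∈ X, χ (z⁻¹ * g) = Nat.card G * c ⟨X, hX⟩ * χ g := by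
    intro χ hχ
    have hirr := S.isIrrChar_of_mem hX hχ
    have hcoeff := S.charInner_sum_smul_superchar c hX hχ
    rw [hc, charInner_indicator_singleton, inv_mul_eq_iff_eq_mul₀ (by simp)] at hcoeff
    apply mul_left_cancel₀ hirr.apply_one_ne_zero
    rw [hirr.apply_one_mul_apply_mul_of_mem_center (inv_mem (S.centerSet_subset_center hz)) g,
      hcoeff]
    ring
  simp only [SCT.superchar, Finset.mul_sum]
  exact Finset.sum_congr rfl fun χ hχ' => by rw [hχ χ hχ']; ring

lemma inv_mul_mem_cls {z : G} (hz : z ∈ S.centerSet) {a b : G} (h : a ∈ S.cls b) :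
    z⁻¹ * a ∈ S.cls (z⁻¹ * b) :=
  S.mem_cls_of_forall_superchar_eq fun X hX => by
    obtain ⟨ε, hε⟩ := S.exists_superchar_inv_mul hz hX
    rw [hε, hε]
    exact congrArg _ (S.superchar_mem_clsFun hX b a h)

/-- In a finite group the subgroup generated by a set is its submonoid closure, so closure of
`Z(S)` under inverses is never needed. -/
def centerSubmonoid : Submonoid G where
  carrier := S.centerSet
  one_mem' := S.cls_one
  mul_mem' {z w} hz hw := by
    refine Set.eq_singleton_iff_unique_mem.mpr ⟨S.mem_cls _, fun k hk => ?_⟩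
    have hzk := S.inv_mul_mem_cls hz hk
    rw [inv_mul_cancel_left, (hw : S.cls w = {w}), Set.mem_singleton_iff] at hzk
    exact inv_mul_eq_iff_eq_mul.mp hzk

lemma VS_subset_centerSet_of_isVZ (hS : S.IsVZ) : (S.VS : Set G) ⊆ S.centerSet := by
  intro g hg
  rw [SetLike.mem_coe, SCT.VS, SCT.V, ← Subgroup.mem_toSubmonoid,
    Subgroup.closure_toSubmonoid_of_finite] at hg
  refine (Submonoid.closure_le (S := S.centerSubmonoid)).mpr ?_ hg
  rintro x ⟨f, hf, hfx⟩
  by_contra hx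
  exact hfx (hS f hf x hx)

end SCT

/-- `G` is a `VZ(S)`-group iff `[G,S] ≤ V(S) ≤ Z(S)`. -/
theorem isVZ_iff_derived_le_VS_le_center (S : SCT G) :
    S.IsVZ ↔ (S.derived ≤ S.VS ∧ (S.VS : Set G) ⊆ S.centerSet) := by
  refine ⟨fun hS => ⟨S.derived_le_VS, S.VS_subset_centerSet_of_isVZ hS⟩, ?_⟩
  rintro ⟨-, hV⟩ f hf g hg
  by_contra hfg
  exact hg (hV (Subgroup.subset_closure ⟨f, hf, hfg⟩))
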